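/- The matrix Okubo norm is multiplicative: for all 3×3 complex matrices x, y with xᴴ = x, yᴴ = y, and trace x = trace y = 0, one has n(x * y) = n(x)·n(y), where n(z) = (1/6)·trace(z z) (a real number for Hermitian z). -/
import Mathlib


noncomputable section

open Matrix

/-- `μ = (3 + i√3)/6`. -/
def okMu : ℂ := (3 + Complex.I * Real.sqrt 3) / 6

/-- The matrix Okubo product
`x * y = μ·(xy) + (conj μ)·(yx) − (1/3)(trace(xy))·1` on 3×3 complex matrices. -/
def okmulM (x y : Matrix (Fin 3) (Fin 3) ℂ) : Matrix (Fin 3) (Fin 3) ℂ :=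
  okMu • (x * y) + (starRingEnd ℂ okMu) • (y * x) -
    ((1 / 3 : ℂ) * Matrix.trace (x * y)) • (1 : Matrix (Fin 3) (Fin 3) ℂ)

/-- The matrix Okubo norm `n(z) = (1/6)·trace(z z)`. -/
def nM (z : Matrix (Fin 3) (Fin 3) ℂ) : ℂ := (1 / 6 : ℂ) * Matrix.trace (z * z)

lemma okMu_conj : starRingEnd ℂ okMu = (3 - Complex.I * Real.sqrt 3) / 6 := by
  simp only [okMu, map_div₀, map_add, _root_.map_mul, Complex.conj_I, Complex.conj_ofReal,
    map_ofNat]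
  ring

lemma okMu_add : okMu + starRingEnd ℂ okMu = 1 := by
  rw [okMu_conj, okMu]; ring

lemma okMu_mul : okMu * starRingEnd ℂ okMu = 1/3 := by
  rw [okMu_conj, okMu]
  have hs : (Real.sqrt 3 : ℂ)^2 = 3 := by
    rw [← Complex.ofReal_pow, Real.sq_sqrt (by norm_num : (0:ℝ) ≤ 3)]; norm_num
  have hI := Complex.I_sq
  linear_combination (-1/36 : ℂ) * (Real.sqrt 3 : ℂ)^2 * hI + (1/36:ℂ) * hs

/-- The key scalar identity: for traceless 3×3 matrices,
`tr((xy)²) + 2·tr(x²y²) − tr(xy)² = (1/2)·tr(x²)·tr(y²)`. -/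
lemma key_scalar (x y : Matrix (Fin 3) (Fin 3) ℂ)
    (htx : Matrix.trace x = 0) (hty : Matrix.trace y = 0) :
    Matrix.trace (x*y*(x*y)) + 2 * Matrix.trace (x*x*(y*y)) - (Matrix.trace (x*y))^2
      = (1/2) * (Matrix.trace (x*x) * Matrix.trace (y*y)) := by
  simp only [Matrix.trace, Matrix.mul_apply, Matrix.diag, Fin.sum_univ_three] at *
  have hx2 : x 2 2 = -(x 0 0) - x 1 1 := by linear_combination htx
  have hy2 : y 2 2 = -(y 0 0) - y 1 1 := by linear_combination hty
  rw [hx2, hy2]; ring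

lemma trace_cyc1 (x y : Matrix (Fin 3) (Fin 3) ℂ) :
    Matrix.trace (y*x*(y*x)) = Matrix.trace (x*y*(x*y)) := by
  simp only [Matrix.trace, Matrix.mul_apply, Matrix.diag, Fin.sum_univ_three]; ring

lemma trace_cyc2 (x y : Matrix (Fin 3) (Fin 3) ℂ) :
    Matrix.trace (x*y*(y*x)) = Matrix.trace (x*x*(y*y)) := by
  simp only [Matrix.trace, Matrix.mul_apply, Matrix.diag, Fin.sum_univ_three]; ring

lemma trace_cyc3 (x y : Matrix (Fin 3) (Fin 3) ℂ) :
    Matrix.trace (y*x*(x*y)) = Matrix.trace (x*x*(y*y)) := by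
  simp only [Matrix.trace, Matrix.mul_apply, Matrix.diag, Fin.sum_univ_three]; ring

/-- the matrix Okubo norm is multiplicative on traceless Hermitian
matrices. -/
theorem okubo_matrix_norm_multiplicative
    (x y : Matrix (Fin 3) (Fin 3) ℂ)
    (hx : xᴴ = x) (hy : yᴴ = y)
    (htx : Matrix.trace x = 0) (hty : Matrix.trace y = 0) :
    nM (okmulM x y) = nM x * nM y := by
  simp only [nM, okmulM, Matrix.sub_mul, Matrix.mul_sub, Matrix.add_mul, Matrix.mul_add,
    smul_mul_assoc, mul_smul_comm, smul_smul, Matrix.one_mul, Matrix.mul_one,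
    Matrix.trace_sub, Matrix.trace_add, Matrix.trace_smul, smul_eq_mul, Matrix.trace_one,
    Fintype.card_fin, Nat.cast_ofNat, trace_cyc1, trace_cyc2, trace_cyc3,
    Matrix.trace_mul_comm y x]
  have h1 := okMu_add
  have h2 := okMu_mul
  have h3 := key_scalar x y htx hty
  set a := okMu
  set b := starRingEnd ℂ okMu
  set T1 := Matrix.trace (x*y*(x*y))
  set T2 := Matrix.trace (x*x*(y*y))
  set s := Matrix.trace (x*y)
  linear_combination (1/6 : ℂ) * ((a+b+1)*T1 - (2/3)*s^2) * h1
    + (1/6 : ℂ) * (-2*T1 + 2*T2) * h2 + (1/18 : ℂ) * h3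

end
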